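/- Let n ≥ 2 and r ≥ 1 be integers and let (a,b) ∈ ℂ² be non-zero. Then for the function p_r(t) = (a + b·t^(n−1))·(log t)^(r−1) on (0,∞), the (r−1)-st iterate T^(r−1)(p_r) does not vanish identically on (0,∞), where T is the radial operator T(p)(t) = t²·p''(t) − (n−2)·t·p'(t). -/

import Mathlib

/-!
In the variable `s = log t` the operator `T` becomes `D(D − μ)` with `D = d/ds` and `μ = n − 1`,
and conjugating by `e^{μs}` turns it into `D(D + μ)`. Hence on `P(s) + e^{μs} Q(s)` with
polynomials `P, Q` it acts as `D(D − μ)` on `P` and `D(D + μ)` on `Q`, and `d` applications to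
`a s^d` and `b s^d` leave the constants `d! (−μ)^d a` and `d! μ^d b`. So
`T^d p_{d+1}(t) = d! ((−μ)^d a + μ^d b t^μ)`, which is not identically zero since `μ ≠ 0`.
-/

/-- The radial hyperbolic operator `T(p)(t) = t²·p''(t) − (n−2)·t·p'(t)`. -/
noncomputable def radialT (n : ℕ) (p : ℝ → ℂ) : ℝ → ℂ := fun t =>
  (t : ℂ) ^ 2 * deriv (deriv p) t - ((n : ℂ) - 2) * (t : ℂ) * deriv p t

open Polynomial Set

namespace Polynomial

variable {R : Type*} [CommSemiring R]

noncomputable def shiftDeriv (c : R) : Module.End R R[X] := derivative + c • 1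

theorem shiftDeriv_apply (c : R) (P : R[X]) : shiftDeriv c P = derivative P + c • P := rfl

theorem commute_derivative_shiftDeriv (c : R) :
    Commute (derivative : Module.End R R[X]) (shiftDeriv c) :=
  (Commute.refl _).add_right ((Commute.one_right _).smul_right c)

theorem shiftDeriv_pow_C (c a : R) (j : ℕ) : (shiftDeriv c ^ j) (C a) = C (c ^ j * a) := by
  induction j with
  | zero => simp
  | succ j ih =>
    rw [pow_succ', Module.End.mul_apply, ih, shiftDeriv_apply, derivative_C, zero_add, smul_C,
      smul_eq_mul, pow_succ', mul_assoc]

noncomputable def derivMulShiftDeriv (c : R) : Module.End R R[X] := derivative * shiftDeriv c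

/-- `(D(D + c))^d = (D + c)^d D^d`, and `D^d` sends `X^d` to the constant `d!`. -/
theorem derivMulShiftDeriv_pow_C_mul_X_pow (c a : R) (d : ℕ) :
    (derivMulShiftDeriv c ^ d) (C a * X ^ d) = C (d.factorial * c ^ d * a) := by
  rw [derivMulShiftDeriv, (commute_derivative_shiftDeriv c).eq,
    (commute_derivative_shiftDeriv c).symm.mul_pow, Module.End.mul_apply,
    Module.End.pow_apply derivative, iterate_derivative_C_mul, iterate_derivative_X_pow_eq_C_mul,
    Nat.descFactorial_self, Nat.sub_self, pow_zero, mul_one, ← C_mul, shiftDeriv_pow_C]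
  ring_nf

end Polynomial

noncomputable def expPolyFun (μ : ℂ) (P Q : ℂ[X]) : ℝ → ℂ :=
  fun s => P.eval (s : ℂ) + Complex.exp (μ * s) * Q.eval (s : ℂ)

theorem expPolyFun_sub_smul (μ k : ℂ) (P₁ Q₁ P₂ Q₂ : ℂ[X]) (s : ℝ) :
    expPolyFun μ P₁ Q₁ s - k * expPolyFun μ P₂ Q₂ s =
      expPolyFun μ (P₁ - k • P₂) (Q₁ - k • Q₂) s := by
  simp only [expPolyFun, eval_sub, eval_smul, smul_eq_mul]
  ring

theorem hasDerivAt_expPolyFun (μ : ℂ) (P Q : ℂ[X]) (s : ℝ) :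
    HasDerivAt (expPolyFun μ P Q) (expPolyFun μ (derivative P) (shiftDeriv μ Q) s) s := by
  have hP := (P.hasDerivAt (s : ℂ)).comp_ofReal
  have hQ := (Q.hasDerivAt (s : ℂ)).comp_ofReal
  have hexp := ((Complex.hasDerivAt_exp (μ * s)).comp (s : ℂ)
    ((hasDerivAt_id (s : ℂ)).const_mul μ)).comp_ofReal
  refine (hP.add (hexp.mul hQ)).congr_deriv ?_
  simp only [expPolyFun, shiftDeriv_apply, eval_add, eval_smul, smul_eq_mul, Function.comp_apply]
  ring

theorem HasDerivAt.comp_log {g : ℝ → ℂ} {g' : ℂ} {u : ℝ} (hg : HasDerivAt g g' (Real.log u))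
    (hu : u ≠ 0) : HasDerivAt (fun t => g (Real.log t)) ((u : ℂ)⁻¹ * g') u := by
  have := hg.scomp u (Real.hasDerivAt_log hu)
  rwa [Function.comp_def, Complex.real_smul, Complex.ofReal_inv] at this

theorem radialT_congr {n : ℕ} {g h : ℝ → ℂ} {s : Set ℝ} (hs : IsOpen s) (hgh : EqOn g h s) :
    EqOn (radialT n g) (radialT n h) s := by
  have hd : ∀ {u v : ℝ → ℂ}, EqOn u v s → EqOn (deriv u) (deriv v) s := fun huv _ ht =>
    (huv.eventuallyEq_of_mem (hs.mem_nhds ht)).deriv_eq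
  intro t ht
  simp only [radialT, hd hgh ht, hd (hd hgh) ht]

theorem radialT_iterate_congr {n j : ℕ} {g h : ℝ → ℂ} {s : Set ℝ} (hs : IsOpen s)
    (hgh : EqOn g h s) : EqOn ((radialT n)^[j] g) ((radialT n)^[j] h) s := by
  induction j with
  | zero => exact hgh
  | succ j ih =>
    simp only [Function.iterate_succ_apply']
    exact radialT_congr hs ih

theorem radialT_comp_log (n : ℕ) {f f' f'' : ℝ → ℂ} (hf : ∀ s, HasDerivAt f (f' s) s)
    (hf' : ∀ s, HasDerivAt f' (f'' s) s) {t : ℝ} (ht : 0 < t) :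
    radialT n (fun t => f (Real.log t)) t =
      f'' (Real.log t) - ((n : ℂ) - 1) * f' (Real.log t) := by
  have hderiv : EqOn (deriv fun t => f (Real.log t))
      (fun u : ℝ => (u : ℂ)⁻¹ * f' (Real.log u)) (Ioi 0) :=
    fun u hu => ((hf _).comp_log (ne_of_gt hu)).deriv
  have ht' : (t : ℂ) ≠ 0 := Complex.ofReal_ne_zero.mpr ht.ne'
  have hderiv2 : HasDerivAt (fun u : ℝ => (u : ℂ)⁻¹ * f' (Real.log u))
      (-((t : ℂ) ^ 2)⁻¹ * f' (Real.log t) + (t : ℂ)⁻¹ * ((t : ℂ)⁻¹ * f'' (Real.log t))) t :=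
    ((hasDerivAt_inv ht').comp_ofReal).mul ((hf' _).comp_log ht.ne')
  rw [radialT, ((hderiv.eventuallyEq_of_mem (Ioi_mem_nhds ht)).deriv_eq).trans hderiv2.deriv,
    hderiv ht]
  field_simp
  ring

theorem radialT_expPolyFun_comp_log (n : ℕ) (P Q : ℂ[X]) {t : ℝ} (ht : 0 < t) :
    radialT n (fun t => expPolyFun ((n : ℂ) - 1) P Q (Real.log t)) t =
      expPolyFun ((n : ℂ) - 1) (derivMulShiftDeriv (1 - (n : ℂ)) P)
        (derivMulShiftDeriv ((n : ℂ) - 1) Q) (Real.log t) := by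
  rw [radialT_comp_log n (hasDerivAt_expPolyFun _ P Q) (hasDerivAt_expPolyFun _ _ _) ht,
    expPolyFun_sub_smul]
  congr 2 <;>
    simp only [derivMulShiftDeriv, Module.End.mul_apply, shiftDeriv_apply, map_add, map_smul] <;>
    module

theorem radialT_iterate_expPolyFun_comp_log (n j : ℕ) (P Q : ℂ[X]) :
    EqOn ((radialT n)^[j] fun t => expPolyFun ((n : ℂ) - 1) P Q (Real.log t))
      (fun t => expPolyFun ((n : ℂ) - 1) ((derivMulShiftDeriv (1 - (n : ℂ)) ^ j) P)
        ((derivMulShiftDeriv ((n : ℂ) - 1) ^ j) Q) (Real.log t)) (Ioi 0) := by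
  induction j with
  | zero => intro t _; simp
  | succ j ih =>
    intro t ht
    rw [Function.iterate_succ_apply', radialT_congr isOpen_Ioi ih ht,
      radialT_expPolyFun_comp_log n _ _ ht, pow_succ', pow_succ', Module.End.mul_apply,
      Module.End.mul_apply]

theorem exists_pos_add_pow_mul_ne_zero {A B : ℂ} {m : ℕ} (hm : m ≠ 0) (hAB : A ≠ 0 ∨ B ≠ 0) :
    ∃ t ∈ Ioi (0 : ℝ), A + (t : ℂ) ^ m * B ≠ 0 := by
  by_contra! h
  have h1 : A + B = 0 := by simpa using h 1 (mem_Ioi.2 one_pos)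
  have h2 : A + 2 ^ m * B = 0 := by simpa using h 2 (mem_Ioi.2 two_pos)
  have h2m : (2 : ℂ) ^ m - 1 ≠ 0 := by
    rw [sub_ne_zero]
    exact_mod_cast Nat.pow_eq_one.not.mpr (by omega)
  have hB : B = 0 :=
    (mul_eq_zero.mp (by linear_combination h2 - h1 : B * (2 ^ m - 1) = 0)).resolve_right h2m
  exact hAB.elim (· (by linear_combination h1 - hB)) (· hB)

theorem radialT_iterate_not_vanish_general (n r : ℕ) (hn : 2 ≤ n)
    (a b : ℂ) (hab : (a, b) ≠ (0, 0)) :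
    ∃ t ∈ Set.Ioi (0 : ℝ),
      (radialT n)^[r - 1]
        (fun t => (a + b * (t : ℂ) ^ (n - 1)) * (Real.log t : ℂ) ^ (r - 1)) t
        ≠ 0 := by
  set d := r - 1
  have hμ : (n : ℂ) - 1 = (n - 1 : ℕ) := by rw [Nat.cast_sub (by omega), Nat.cast_one]
  have hμ0 : (n : ℂ) - 1 ≠ 0 := by rw [hμ]; exact_mod_cast (by omega : n - 1 ≠ 0)
  have hμ0' : 1 - (n : ℂ) ≠ 0 := by rwa [← neg_sub, neg_ne_zero]
  have hfac : (d.factorial : ℂ) ≠ 0 := by exact_mod_cast d.factorial_ne_zero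
  have hpow (t : ℝ) (ht : 0 < t) : Complex.exp (((n : ℂ) - 1) * Real.log t) = t ^ (n - 1) := by
    rw [hμ, Complex.exp_nat_mul, ← Complex.ofReal_exp, Real.exp_log ht]
  have hp : EqOn (fun t : ℝ => (a + b * (t : ℂ) ^ (n - 1)) * (Real.log t : ℂ) ^ d)
      (fun t => expPolyFun ((n : ℂ) - 1) (C a * X ^ d) (C b * X ^ d) (Real.log t)) (Ioi 0) := by
    intro t ht
    simp only [expPolyFun, eval_mul, eval_C, eval_pow, eval_X, hpow t ht]
    ring
  obtain ⟨t, ht, hne⟩ := exists_pos_add_pow_mul_ne_zero (by omega : n - 1 ≠ 0)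
    ((by rwa [Ne, Prod.ext_iff, not_and_or] at hab : a ≠ 0 ∨ b ≠ 0).imp
      (mul_ne_zero (mul_ne_zero hfac (pow_ne_zero d hμ0')))
      (mul_ne_zero (mul_ne_zero hfac (pow_ne_zero d hμ0))))
  refine ⟨t, ht, ?_⟩
  rw [radialT_iterate_congr isOpen_Ioi hp ht, radialT_iterate_expPolyFun_comp_log n d _ _ ht,
    derivMulShiftDeriv_pow_C_mul_X_pow, derivMulShiftDeriv_pow_C_mul_X_pow]
  simpa only [expPolyFun, eval_C, hpow t ht] using hne

/-- For integers `n ≥ 2`, `r ≥ 1` and non-zero `(a,b) ∈ ℂ²`, for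
the function `p_r(t) = (a + b·t^(n−1))·(log t)^(r−1)` the `(r−1)`-st iterate
`T^(r−1)(p_r)` does not vanish identically on `(0,∞)`. -/
theorem radialT_iterate_not_vanish (n r : ℕ) (hn : 2 ≤ n) (hr : 1 ≤ r)
    (a b : ℂ) (hab : (a, b) ≠ (0, 0)) :
    ∃ t ∈ Set.Ioi (0 : ℝ),
      (radialT n)^[r - 1]
        (fun t => (a + b * (t : ℂ) ^ (n - 1)) * (Real.log t : ℂ) ^ (r - 1)) t
        ≠ 0 :=
  radialT_iterate_not_vanish_general n r hn a b hab
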